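/- arXiv:1703.01955 — 2 statements merged into one kernel-verified Lean document; each statement's English description precedes it below -/
import Mathlib

section
/- Let m ≥ 2. If the sequence (|t_m(n)|)_{n∈ℕ} is unbounded, then the sequence (t_m(n))_{n∈ℕ} is unbounded above and unbounded below; that is, for every C > 0 there exist n, n' with t_m(n) > C and t_m(n') < -C. -/
/-!
From `T(x) = (1 - x) T(x²)` we get `T^m(x) = (1 - x)^m T^m(x²)`, and comparing odd coefficients
gives `t_m(2n+1) = -∑ᵢ C(m, 2i+1) t_m(n-i)`, whose leading term is `-m t_m(n)`. If `t_m ≤ C`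
everywhere, the other terms contribute at most `2^m C`, so a value `t_m(n) < -2^m C` would force
`t_m(2n+1) > (m - 1) 2^m C ≥ C`. Hence `t_m` bounded above is bounded, and since the recursion
is invariant under `a ↦ -a`, so is `t_m` bounded below.
-/

/-- The generating function `T(x) = ∑ (-1)^{s₂(n)} xⁿ = ∏ (1 - x^{2^j})`
of the Prouhet–Thue–Morse sequence. -/
noncomputable def T : PowerSeries ℤ :=
  PowerSeries.mk fun n => (-1) ^ (Nat.digits 2 n).sum

namespace PowerSeries

variable {R : Type*} [CommRing R]

noncomputable def evenPart (f : R⟦X⟧) : R⟦X⟧ := mk fun n => coeff (2 * n) f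

noncomputable def oddPart (f : R⟦X⟧) : R⟦X⟧ := mk fun n => coeff (2 * n + 1) f

@[simp] lemma coeff_evenPart (f : R⟦X⟧) (n : ℕ) : coeff n (evenPart f) = coeff (2 * n) f :=
  coeff_mk _ _

@[simp] lemma coeff_oddPart (f : R⟦X⟧) (n : ℕ) : coeff n (oddPart f) = coeff (2 * n + 1) f :=
  coeff_mk _ _

lemma expand_evenPart_add_X_mul_expand_oddPart (f : R⟦X⟧) :
    expand 2 two_ne_zero (evenPart f) + X * expand 2 two_ne_zero (oddPart f) = f := by
  ext n
  obtain ⟨k, rfl | rfl⟩ := Nat.even_or_odd' n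
  · have hX : coeff (2 * k) (X * expand 2 two_ne_zero (oddPart f)) = 0 := by
      rcases k with _ | k
      · exact coeff_zero_X_mul _
      · rw [show 2 * (k + 1) = 2 * k + 1 + 1 by ring, coeff_succ_X_mul,
          coeff_expand_of_not_dvd _ _ _ (by omega)]
    rw [map_add, hX, add_zero, coeff_expand_mul, coeff_evenPart]
  · rw [map_add, coeff_succ_X_mul, coeff_expand_mul, coeff_oddPart,
      coeff_expand_of_not_dvd _ _ _ (by omega), zero_add]

lemma coeff_odd_mul_expand (f g : R⟦X⟧) (n : ℕ) :
    coeff (2 * n + 1) (f * expand 2 two_ne_zero g) = coeff n (oddPart f * g) := by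
  conv_lhs => rw [← expand_evenPart_add_X_mul_expand_oddPart f]
  rw [add_mul, mul_assoc, ← map_mul, ← map_mul, map_add, coeff_succ_X_mul,
    coeff_expand_of_not_dvd _ _ _ (by omega), coeff_expand_mul, zero_add]

lemma coeff_one_sub_X_pow (m n : ℕ) : coeff n ((1 - X : R⟦X⟧) ^ m) = (-1) ^ n * m.choose n := by
  have : (1 - X : R⟦X⟧) ^ m = rescale (-1) (((1 + Polynomial.X) ^ m : Polynomial R) : R⟦X⟧) := by
    simp [sub_eq_add_neg]
  rw [this, coeff_rescale, Polynomial.coeff_coe, Polynomial.coeff_one_add_X_pow]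

end PowerSeries

open PowerSeries Finset

lemma coeff_T_two_mul (n : ℕ) : coeff (2 * n) T = coeff n T := by
  rcases n.eq_zero_or_pos with rfl | hn
  · rfl
  · simp [T, Nat.digits_def' one_lt_two (by omega : 0 < 2 * n)]

lemma coeff_T_two_mul_add_one (n : ℕ) : coeff (2 * n + 1) T = -coeff n T := by
  simp [T, pow_add, Nat.add_div]

lemma evenPart_T : evenPart T = T :=
  PowerSeries.ext fun n => by rw [coeff_evenPart, coeff_T_two_mul]

lemma oddPart_T : oddPart T = -T := PowerSeries.ext fun n => by simp [coeff_T_two_mul_add_one]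

lemma T_eq_one_sub_X_mul_expand : T = (1 - X) * expand 2 two_ne_zero T := by
  conv_lhs => rw [← expand_evenPart_add_X_mul_expand_oddPart T, evenPart_T, oddPart_T]
  rw [map_neg]
  ring

lemma sum_choose_le_two_pow (m : ℕ) {f : ℕ → ℕ} (hf : Function.Injective f) (s : Finset ℕ) :
    ∑ i ∈ s, m.choose (f i) ≤ 2 ^ m := by
  calc ∑ i ∈ s, m.choose (f i) = ∑ j ∈ s.map ⟨f, hf⟩, m.choose j := by
        rw [sum_map]; rfl
    _ ≤ ∑ j ∈ range (m + 1), m.choose j :=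
        sum_le_sum_of_ne_zero fun j _ hj =>
          mem_range.2 (Nat.lt_succ_of_le (not_lt.1 (mt Nat.choose_eq_zero_iff.2 hj)))
    _ = 2 ^ m := Nat.sum_range_choose m

lemma self_le_two_pow_mul (m : ℕ) {C : ℤ} (hC : 0 ≤ C) : C ≤ 2 ^ m * C :=
  le_mul_of_one_le_left hC (one_le_pow₀ one_le_two)

def OddIndexRecurrence (m : ℕ) (a : ℕ → ℤ) : Prop :=
  ∀ n, a (2 * n + 1) = -∑ i ∈ range (n + 1), (m.choose (2 * i + 1) : ℤ) * a (n - i)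

lemma oddIndexRecurrence_coeff_T_pow (m : ℕ) :
    OddIndexRecurrence m fun n => coeff n (T ^ m) := fun n => by
  dsimp only
  conv_lhs => rw [T_eq_one_sub_X_mul_expand, mul_pow, ← map_pow]
  rw [coeff_odd_mul_expand, coeff_mul, Nat.sum_antidiagonal_eq_sum_range_succ_mk,
    ← sum_neg_distrib]
  refine sum_congr rfl fun i _ => ?_
  rw [coeff_oddPart, coeff_one_sub_X_pow, (odd_two_mul_add_one i).neg_one_pow]
  ring

namespace OddIndexRecurrence

variable {m : ℕ} {a : ℕ → ℤ}

lemma neg (ha : OddIndexRecurrence m a) : OddIndexRecurrence m (-a) := fun n => by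
  simp only [Pi.neg_apply, ha n, mul_neg, sum_neg_distrib]

lemma neg_two_pow_mul_le (ha : OddIndexRecurrence m a) (hm : 2 ≤ m) {C : ℤ} (hC : 0 ≤ C)
    (hle : ∀ n, a n ≤ C) (n : ℕ) : -(2 ^ m * C) ≤ a n := by
  by_contra! hn
  have hsplit : a (2 * n + 1) = -(m * a n) -
      ∑ i ∈ range n, (m.choose (2 * (i + 1) + 1) : ℤ) * a (n - (i + 1)) := by
    rw [ha, sum_range_succ']
    simp only [mul_zero, zero_add, Nat.choose_one_right, Nat.sub_zero]
    ring
  have htail : ∑ i ∈ range n, (m.choose (2 * (i + 1) + 1) : ℤ) * a (n - (i + 1)) ≤ 2 ^ m * C :=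
    calc _ ≤ ∑ i ∈ range n, (m.choose (2 * (i + 1) + 1) : ℤ) * C :=
          sum_le_sum fun i _ => mul_le_mul_of_nonneg_left (hle _) (by positivity)
      _ = ((∑ i ∈ range n, m.choose (2 * (i + 1) + 1) : ℕ) : ℤ) * C := by
          rw [Nat.cast_sum, sum_mul]
      _ ≤ 2 ^ m * C := by
          gcongr
          exact_mod_cast sum_choose_le_two_pow m (f := fun i => 2 * (i + 1) + 1)
            (fun i j h => by simpa using h) _
  have hm' : (2 : ℤ) ≤ m := by exact_mod_cast hm
  have hhead : (m : ℤ) * (2 ^ m * C) < -(m * a n) := by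
    rw [← mul_neg]
    exact mul_lt_mul_of_pos_left (lt_neg_of_lt_neg hn) (by omega)
  have hm2 : 2 * (2 ^ m * C) ≤ m * (2 ^ m * C) := mul_le_mul_of_nonneg_right hm' (by positivity)
  linarith [self_le_two_pow_mul m hC, hle (2 * n + 1)]

lemma exists_lt_of_unbounded_abs (ha : OddIndexRecurrence m a) (hm : 2 ≤ m)
    (hunb : ∀ C, ∃ n, C < |a n|) {C : ℤ} (hC : 0 ≤ C) : ∃ n, C < a n := by
  by_contra! hle
  obtain ⟨n, hn⟩ := hunb (2 ^ m * C)
  exact hn.not_ge <|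
    abs_le.2 ⟨ha.neg_two_pow_mul_le hm hC hle n, (hle n).trans (self_le_two_pow_mul m hC)⟩

end OddIndexRecurrence

theorem stmt9 (m : ℕ) (hm : 2 ≤ m)
    (h : ∀ C : ℤ, ∃ n : ℕ, C < |PowerSeries.coeff n (T ^ m)|) :
    ∀ C : ℤ, 0 < C →
      (∃ n : ℕ, C < PowerSeries.coeff n (T ^ m)) ∧
      ∃ n' : ℕ, PowerSeries.coeff n' (T ^ m) < -C := by
  intro C hC
  have ha := oddIndexRecurrence_coeff_T_pow m
  refine ⟨ha.exists_lt_of_unbounded_abs hm h hC.le, ?_⟩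
  obtain ⟨n, hn⟩ := ha.neg.exists_lt_of_unbounded_abs hm (by simpa using h) hC.le
  exact ⟨n, by simp only [Pi.neg_apply] at hn; linarith⟩
end

section
/- The sequence (t_2(n))_{n∈ℕ} is log-concave: for every integer n ≥ 1, t_2(n)² > t_2(n-1)·t_2(n+1). Moreover this is optimal: for every integer k ≥ 3 one has t_2(2^k-4)² = t_2(2^k-5)·t_2(2^k-3) + 1, so t_2(n)² = t_2(n-1)·t_2(n+1) + 1 for infinitely many n. -/
open Finset PowerSeries

theorem Finset.sum_range_two_mul {M : Type*} [AddCommMonoid M] (f : ℕ → M) (n : ℕ) :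
    ∑ i ∈ range (2 * n), f i = ∑ i ∈ range n, (f (2 * i) + f (2 * i + 1)) := by
  induction n with
  | zero => simp
  | succ n ih =>
    rw [Nat.mul_succ, sum_range_succ, sum_range_succ, ih, sum_range_succ, add_assoc]

theorem Int.mul_lt_sq_of_abs_add_le {x y z : ℤ} (h : |x + z| ≤ 2 * |y|) (hxy : Odd (x - y)) :
    x * z < y ^ 2 := by
  have hxy' := Int.odd_iff.1 hxy
  have hsq : (x + z) ^ 2 ≤ (2 * y) ^ 2 := sq_le_sq.2 (by rwa [abs_mul, abs_two])
  rcases eq_or_ne x z with rfl | hxz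
  · have hne : x ^ 2 ≠ y ^ 2 := fun heq ↦ by
      rcases sq_eq_sq_iff_eq_or_eq_neg.1 heq with rfl | rfl <;> omega
    exact lt_of_le_of_ne (by nlinarith) (by rwa [← sq])
  · have : 1 ≤ (x - z) ^ 2 := by
      have : x - z ≠ 0 := sub_ne_zero.2 hxz
      nlinarith [Int.one_le_abs this, sq_abs (x - z), abs_nonneg (x - z)]
    nlinarith

noncomputable def thueMorse (n : ℕ) : ℤ := (-1) ^ (Nat.digits 2 n).sum

theorem thueMorse_zero : thueMorse 0 = 1 := by simp [thueMorse]

theorem thueMorse_two_mul (n : ℕ) : thueMorse (2 * n) = thueMorse n := by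
  rcases Nat.eq_zero_or_pos n with rfl | hn
  · rfl
  · rw [thueMorse, Nat.digits_def' one_lt_two (by omega)]
    simp [thueMorse]

theorem thueMorse_two_mul_add_one (n : ℕ) : thueMorse (2 * n + 1) = -thueMorse n := by
  rw [thueMorse, Nat.digits_def' one_lt_two (by omega),
    show (2 * n + 1) % 2 = 1 by omega, show (2 * n + 1) / 2 = n by omega]
  simp [thueMorse, pow_add]

noncomputable def t₂ (n : ℕ) : ℤ := coeff n (T ^ 2)

theorem t₂_eq_sum (n : ℕ) : t₂ n = ∑ i ∈ range (n + 1), thueMorse i * thueMorse (n - i) := by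
  rw [t₂, sq, coeff_mul, Nat.sum_antidiagonal_eq_sum_range_succ_mk]
  simp [T, thueMorse]

theorem t₂_two_mul_add_one (m : ℕ) : t₂ (2 * m + 1) = -2 * t₂ m := by
  rw [t₂_eq_sum, show 2 * m + 1 + 1 = 2 * (m + 1) by ring, sum_range_two_mul, t₂_eq_sum,
    mul_sum]
  refine sum_congr rfl fun i hi ↦ ?_
  have hi : i ≤ m := Nat.lt_succ_iff.1 (mem_range.1 hi)
  rw [show 2 * m + 1 - 2 * i = 2 * (m - i) + 1 by omega,
    show 2 * m + 1 - (2 * i + 1) = 2 * (m - i) by omega, thueMorse_two_mul, thueMorse_two_mul,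
    thueMorse_two_mul_add_one, thueMorse_two_mul_add_one]
  ring

theorem t₂_two_mul_add_two (m : ℕ) : t₂ (2 * m + 2) = t₂ (m + 1) + t₂ m := by
  rw [t₂_eq_sum, show 2 * m + 2 + 1 = 2 * (m + 1) + 1 by ring, sum_range_succ,
    sum_range_two_mul, show 2 * m + 2 - 2 * (m + 1) = 0 by omega, thueMorse_two_mul,
    t₂_eq_sum (m + 1), sum_range_succ _ (m + 1), Nat.sub_self, t₂_eq_sum m, add_right_comm,
    ← sum_add_distrib]
  congr 1
  refine sum_congr rfl fun i hi ↦ ?_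
  have hi : i ≤ m := Nat.lt_succ_iff.1 (mem_range.1 hi)
  rw [show 2 * m + 2 - 2 * i = 2 * (m + 1 - i) by omega,
    show 2 * m + 2 - (2 * i + 1) = 2 * (m - i) + 1 by omega, thueMorse_two_mul, thueMorse_two_mul,
    thueMorse_two_mul_add_one, thueMorse_two_mul_add_one]
  ring

theorem t₂_zero : t₂ 0 = 1 := by simp [t₂_eq_sum, thueMorse_zero]

theorem t₂_one : t₂ 1 = -2 := by simpa [t₂_zero] using t₂_two_mul_add_one 0

theorem t₂_two : t₂ 2 = -1 := by
  simpa [t₂_zero, t₂_one] using t₂_two_mul_add_two 0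

theorem t₂_emod_two (n : ℕ) : t₂ n % 2 = (n + 1) % 2 := by
  induction n using Nat.strong_induction_on with
  | _ n ih =>
    obtain ⟨m, rfl | rfl | rfl⟩ : ∃ m, n = 0 ∨ n = 2 * m + 1 ∨ n = 2 * m + 2 :=
      ⟨(n - 1) / 2, by omega⟩
    · simp [t₂_zero]
    · rw [t₂_two_mul_add_one]
      omega
    · rw [t₂_two_mul_add_two]
      have := ih m (by omega)
      have := ih (m + 1) (by omega)
      omega

theorem abs_t₂_add_t₂_le (n : ℕ) : |t₂ n + t₂ (n + 2)| ≤ 2 * |t₂ (n + 1)| := by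
  induction n using Nat.strong_induction_on with
  | _ n ih =>
    obtain ⟨m, rfl | rfl | rfl⟩ : ∃ m, n = 0 ∨ n = 2 * m + 1 ∨ n = 2 * m + 2 :=
      ⟨(n - 1) / 2, by omega⟩
    · norm_num [t₂_zero, t₂_one, t₂_two]
    · rw [t₂_two_mul_add_one, show 2 * m + 1 + 2 = 2 * (m + 1) + 1 by ring, t₂_two_mul_add_one,
        show 2 * m + 1 + 1 = 2 * m + 2 by ring, t₂_two_mul_add_two, ← mul_add, abs_mul, add_comm]
      norm_num
    · rw [show 2 * m + 2 + 2 = 2 * (m + 1) + 2 by ring, t₂_two_mul_add_two, t₂_two_mul_add_two,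
        show 2 * m + 2 + 1 = 2 * (m + 1) + 1 by ring, t₂_two_mul_add_one, abs_mul]
      calc |t₂ (m + 1) + t₂ m + (t₂ (m + 1 + 1) + t₂ (m + 1))|
          = |(t₂ m + t₂ (m + 2)) + 2 * t₂ (m + 1)| := by ring_nf
        _ ≤ 2 * |t₂ (m + 1)| + 2 * |t₂ (m + 1)| := by
          grw [abs_add_le, abs_mul, abs_two, ih m (by omega)]
        _ = 2 * (|-2| * |t₂ (m + 1)|) := by norm_num; ring

theorem t₂_mul_lt_sq (n : ℕ) : t₂ n * t₂ (n + 2) < t₂ (n + 1) ^ 2 :=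
  Int.mul_lt_sq_of_abs_add_le (abs_t₂_add_t₂_le n)
    (Int.odd_iff.2 (by have := t₂_emod_two n; have := t₂_emod_two (n + 1); omega))

theorem t₂_two_pow_sub_one (k : ℕ) : t₂ (2 ^ k - 1) = (-2) ^ k := by
  induction k with
  | zero => simpa using t₂_zero
  | succ k ih =>
    have := k.one_le_two_pow
    rw [show 2 ^ (k + 1) - 1 = 2 * (2 ^ k - 1) + 1 by omega, t₂_two_mul_add_one, ih, pow_succ]
    ring

theorem three_mul_t₂_two_pow_sub_two (k : ℕ) :
    3 * t₂ (2 ^ (k + 1) - 2) = 1 - (-2) ^ (k + 1) := by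
  induction k with
  | zero => norm_num [t₂_zero]
  | succ k ih =>
    have := k.one_le_two_pow
    have e₁ : 2 ^ (k + 1 + 1) - 2 = 2 * (2 ^ (k + 1) - 2) + 2 := by simp only [pow_add]; omega
    have e₂ : 2 ^ (k + 1) - 2 + 1 = 2 ^ (k + 1) - 1 := by simp only [pow_add]; omega
    rw [e₁, t₂_two_mul_add_two, e₂, t₂_two_pow_sub_one, mul_add, ih]
    ring

theorem three_mul_t₂_two_pow_sub_three (k : ℕ) :
    3 * t₂ (2 ^ (k + 2) - 3) = -2 - (-2) ^ (k + 2) := by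
  have := k.one_le_two_pow
  have e : 2 ^ (k + 2) - 3 = 2 * (2 ^ (k + 1) - 2) + 1 := by simp only [pow_add]; omega
  rw [e, t₂_two_mul_add_one, mul_left_comm, three_mul_t₂_two_pow_sub_two]
  ring

theorem three_mul_t₂_two_pow_sub_four (k : ℕ) :
    3 * t₂ (2 ^ (k + 3) - 4) = (-2) ^ (k + 3) - 1 := by
  have := k.one_le_two_pow
  have e₁ : 2 ^ (k + 3) - 4 = 2 * (2 ^ (k + 2) - 3) + 2 := by simp only [pow_add]; omega
  have e₂ : 2 ^ (k + 2) - 3 + 1 = 2 ^ (k + 1 + 1) - 2 := by simp only [pow_add]; omega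
  rw [e₁, t₂_two_mul_add_two, e₂, mul_add, three_mul_t₂_two_pow_sub_two,
    three_mul_t₂_two_pow_sub_three]
  ring

theorem three_mul_t₂_two_pow_sub_five (k : ℕ) :
    3 * t₂ (2 ^ (k + 3) - 5) = 4 - (-2) ^ (k + 3) := by
  have := k.one_le_two_pow
  have e : 2 ^ (k + 3) - 5 = 2 * (2 ^ (k + 2) - 3) + 1 := by simp only [pow_add]; omega
  rw [e, t₂_two_mul_add_one, mul_left_comm, three_mul_t₂_two_pow_sub_three]
  ring

theorem t₂_two_pow_sub_four_sq {k : ℕ} (hk : 3 ≤ k) :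
    t₂ (2 ^ k - 4) ^ 2 = t₂ (2 ^ k - 5) * t₂ (2 ^ k - 3) + 1 := by
  obtain ⟨k, rfl⟩ := Nat.exists_eq_add_of_le' hk
  have h4 := three_mul_t₂_two_pow_sub_four k
  have h5 := three_mul_t₂_two_pow_sub_five k
  have h3 := three_mul_t₂_two_pow_sub_three (k + 1)
  have : (9 : ℤ) * t₂ (2 ^ (k + 3) - 4) ^ 2
      = 9 * (t₂ (2 ^ (k + 3) - 5) * t₂ (2 ^ (k + 3) - 3) + 1) := by
    linear_combination (3 * t₂ (2 ^ (k + 3) - 4) + (-2) ^ (k + 3) - 1) * h4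
      - 3 * t₂ (2 ^ (k + 3) - 3) * h5 - (4 - (-2) ^ (k + 3)) * h3
  omega

theorem stmt14 :
    (∀ n : ℕ, 1 ≤ n →
      PowerSeries.coeff (R := ℤ) (n - 1) (T ^ 2) * PowerSeries.coeff (R := ℤ) (n + 1) (T ^ 2) <
        PowerSeries.coeff (R := ℤ) n (T ^ 2) ^ 2) ∧
    (∀ k : ℕ, 3 ≤ k →
      PowerSeries.coeff (R := ℤ) (2 ^ k - 4) (T ^ 2) ^ 2 =
        PowerSeries.coeff (R := ℤ) (2 ^ k - 5) (T ^ 2) * PowerSeries.coeff (R := ℤ) (2 ^ k - 3) (T ^ 2) + 1) ∧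
    {n : ℕ | 1 ≤ n ∧
      PowerSeries.coeff (R := ℤ) n (T ^ 2) ^ 2 =
        PowerSeries.coeff (R := ℤ) (n - 1) (T ^ 2) * PowerSeries.coeff (R := ℤ) (n + 1) (T ^ 2) + 1}.Infinite := by
  refine ⟨fun n hn ↦ ?_, fun k hk ↦ t₂_two_pow_sub_four_sq hk, ?_⟩
  · obtain ⟨m, rfl⟩ := Nat.exists_eq_add_of_le' hn
    exact t₂_mul_lt_sq m
  · refine Set.infinite_of_forall_exists_gt fun N ↦ ?_
    have hN : N + 5 ≤ 2 ^ (N + 3) := by have := N.lt_two_pow_self; rw [pow_add]; omega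
    refine ⟨2 ^ (N + 3) - 4, ⟨by omega, ?_⟩, by omega⟩
    rw [show 2 ^ (N + 3) - 4 - 1 = 2 ^ (N + 3) - 5 by omega,
      show 2 ^ (N + 3) - 4 + 1 = 2 ^ (N + 3) - 3 by omega]
    exact t₂_two_pow_sub_four_sq (by omega)
end
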